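/- arXiv:1812.06347 — 5 statements merged into one kernel-verified Lean document; each statement's English description precedes it below -/
import Mathlib

section
/- For every real x ≥ 1, S(x+1/2)² ≤ S(x)·S(x+1) ≤ e^{1/(2x)}·S(x+1/2)², where S is the Stirling approximation function. -/
noncomputable def S (x : ℝ) : ℝ := Real.sqrt (2 * Real.pi * x) * (x / Real.exp 1) ^ x

lemma S_pos {y : ℝ} (hy : 0 < y) : 0 < S y := by
  unfold S
  have h1 : 0 < 2 * Real.pi * y := by positivity
  have h2 : 0 < y / Real.exp 1 := by positivity
  positivity

lemma log_S {y : ℝ} (hy : 0 < y) :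
    Real.log (S y) = Real.log (2 * Real.pi * y) / 2 + y * Real.log y - y := by
  unfold S
  rw [Real.log_mul (by positivity) (by positivity), Real.log_sqrt (by positivity),
    Real.log_rpow (by positivity), Real.log_div hy.ne' (Real.exp_ne_zero 1), Real.log_exp]
  ring

theorem stmt_0 (x : ℝ) (hx : 1 ≤ x) :
    S (x + 1/2) ^ 2 ≤ S x * S (x + 1) ∧
    S x * S (x + 1) ≤ Real.exp (1 / (2 * x)) * S (x + 1/2) ^ 2 := by
  have hx0 : 0 < x := by linarith
  have hx1 : (0:ℝ) < x + 1 := by linarith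
  have hxh : (0:ℝ) < x + 1/2 := by linarith
  have h2x1 : (0:ℝ) < 2 * x + 1 := by linarith
  have hpi : 0 < Real.pi := Real.pi_pos
  set a : ℝ := 4 * x * (x + 1) / (2 * x + 1) ^ 2 with ha_def
  set b : ℝ := (x + 1) / x with hb_def
  have ha : 0 < a := by positivity
  have hb : 0 < b := by positivity
  have hL : Real.log (S x) + Real.log (S (x + 1)) - 2 * Real.log (S (x + 1/2))
      = (x + 1) * Real.log a + Real.log b / 2 := by
    rw [log_S hx0, log_S hx1, log_S hxh]
    have e1 : Real.log (2 * Real.pi * x) = Real.log 2 + Real.log Real.pi + Real.log x := by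
      rw [Real.log_mul (by positivity) hx0.ne', Real.log_mul (by norm_num) hpi.ne']
    have e2 : Real.log (2 * Real.pi * (x + 1))
        = Real.log 2 + Real.log Real.pi + Real.log (x + 1) := by
      rw [Real.log_mul (by positivity) hx1.ne', Real.log_mul (by norm_num) hpi.ne']
    have e3 : Real.log (2 * Real.pi * (x + 1/2)) = Real.log Real.pi + Real.log (2 * x + 1) := by
      rw [show 2 * Real.pi * (x + 1/2) = Real.pi * (2 * x + 1) by ring,
        Real.log_mul hpi.ne' h2x1.ne']
    have e4 : Real.log (x + 1/2) = Real.log (2 * x + 1) - Real.log 2 := by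
      rw [show x + 1/2 = (2 * x + 1) / 2 by ring, Real.log_div h2x1.ne' (by norm_num)]
    have e5 : Real.log a = 2 * Real.log 2 + Real.log x + Real.log (x + 1)
        - 2 * Real.log (2 * x + 1) := by
      rw [ha_def, Real.log_div (by positivity) (by positivity), Real.log_mul (by positivity)
        hx1.ne', Real.log_mul (by norm_num) hx0.ne', Real.log_pow,
        show (4:ℝ) = 2 ^ 2 by norm_num, Real.log_pow]
      push_cast; ring
    have e6 : Real.log b = Real.log (x + 1) - Real.log x := by
      rw [hb_def, Real.log_div hx1.ne' hx0.ne']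
    rw [e1, e2, e3, e4, e5, e6]
    ring
  -- bounds on log a and log b
  have la_ub : Real.log a ≤ a - 1 := Real.log_le_sub_one_of_pos ha
  have lb_ub : Real.log b ≤ b - 1 := Real.log_le_sub_one_of_pos hb
  have la_lb : 1 - 1/a ≤ Real.log a := by
    have h := Real.log_le_sub_one_of_pos (show (0:ℝ) < a⁻¹ by positivity)
    rw [Real.log_inv] at h
    have : 1/a = a⁻¹ := one_div a
    linarith
  have lb_lb : 1 - 1/b ≤ Real.log b := by
    have h := Real.log_le_sub_one_of_pos (show (0:ℝ) < b⁻¹ by positivity)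
    rw [Real.log_inv] at h
    have : 1/b = b⁻¹ := one_div b
    linarith
  -- numeric identities
  have ida : a - 1 = -1 / (2 * x + 1) ^ 2 := by
    rw [ha_def]; field_simp; ring
  have ida2 : 1 - 1/a = -1 / (4 * x * (x + 1)) := by
    rw [ha_def]; field_simp; ring
  have idb : b - 1 = 1 / x := by
    rw [hb_def]; field_simp; ring
  have idb2 : 1 - 1/b = 1 / (x + 1) := by
    rw [hb_def, one_div_div]; field_simp; ring
  have hLub : Real.log (S x) + Real.log (S (x + 1)) - 2 * Real.log (S (x + 1/2))
      ≤ 1 / (2 * x) := by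
    rw [hL]
    have h1 : (x + 1) * Real.log a ≤ (x + 1) * (a - 1) :=
      mul_le_mul_of_nonneg_left la_ub (by linarith)
    rw [ida] at h1
    have h2 : Real.log b / 2 ≤ (b - 1) / 2 := by linarith
    rw [idb] at h2
    have h3 : (x + 1) * (-1 / (2 * x + 1) ^ 2) ≤ 0 := by
      apply mul_nonpos_of_nonneg_of_nonpos (by linarith)
      have : (0:ℝ) < (2 * x + 1) ^ 2 := by positivity
      exact div_nonpos_of_nonpos_of_nonneg (by norm_num) this.le
    have h4 : 1 / x / 2 = 1 / (2 * x) := by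
      rw [div_div]; ring_nf
    linarith
  have hLlb : 0 ≤ Real.log (S x) + Real.log (S (x + 1)) - 2 * Real.log (S (x + 1/2)) := by
    rw [hL]
    have h1 : (x + 1) * (1 - 1/a) ≤ (x + 1) * Real.log a :=
      mul_le_mul_of_nonneg_left la_lb (by linarith)
    rw [ida2] at h1
    have h2 : (1 - 1/b) / 2 ≤ Real.log b / 2 := by linarith
    rw [idb2] at h2
    have h3 : (x + 1) * (-1 / (4 * x * (x + 1))) = -1 / (4 * x) := by
      field_simp
    rw [h3] at h1
    have h4 : 1 / (4 * x) ≤ 1 / (x + 1) / 2 := by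
      rw [div_div, div_le_div_iff₀ (by positivity) (by positivity)]
      nlinarith
    have h5 : -1 / (4 * x) = -(1 / (4 * x)) := by ring
    linarith [h1, h2, h4]
  have hs1 := S_pos hx0
  have hs2 := S_pos hx1
  have hs3 := S_pos hxh
  constructor
  · have hlog : Real.log (S (x + 1/2) ^ 2) ≤ Real.log (S x * S (x + 1)) := by
      rw [Real.log_pow, Real.log_mul hs1.ne' hs2.ne']
      push_cast
      linarith
    exact (Real.log_le_log_iff (by positivity) (by positivity)).mp hlog
  · have hlog : Real.log (S x * S (x + 1))
        ≤ Real.log (Real.exp (1 / (2 * x)) * S (x + 1/2) ^ 2) := by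
      rw [Real.log_mul (Real.exp_ne_zero _) (by positivity), Real.log_exp, Real.log_mul hs1.ne'
        hs2.ne', Real.log_pow]
      push_cast
      linarith
    exact (Real.log_le_log_iff (by positivity) (by positivity)).mp hlog
end

section
/- Define f : ℕ → ℕ by f(1) = 1 and f(n) = C(n, ⌊n/2⌋)·(f(⌊n/2⌋) + f(⌈n/2⌉)) for n > 1. Then for all n ≥ 1, f(n+1) ≥ 3·f(n). -/
/-!
Split `n` by parity. For `n = 2m` the recurrence gives `f (2m) = 2 C(2m,m) f m` and
`f (2m+1) = C(2m+1,m) (f m + f (m+1)) ≥ 4 C(2m+1,m) f m` by induction, and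
`3 C(2m,m) ≤ 2 C(2m+1,m)` for `m ≥ 1`. For `n = 2m+1` we have `C(2m+2,m+1) = 2 C(2m+1,m)`,
so `f (2m+2) = 4 C(2m+1,m) f (m+1)` and the claim reduces to `3 f m ≤ f (m+1)`.
-/

def f : ℕ → ℕ
  | 0 => 1
  | 1 => 1
  | n + 2 => Nat.choose (n + 2) ((n + 2) / 2) * (f ((n + 2) / 2) + f ((n + 2 + 1) / 2))
decreasing_by all_goals omega

open Nat

lemma f_two_mul {m : ℕ} (hm : 0 < m) : f (2 * m) = 2 * centralBinom m * f m := by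
  obtain ⟨k, rfl⟩ : ∃ k, m = k + 1 := ⟨m - 1, by omega⟩
  rw [centralBinom_eq_two_mul_choose, show 2 * (k + 1) = 2 * k + 2 by ring, f,
    show (2 * k + 2) / 2 = k + 1 by omega, show (2 * k + 2 + 1) / 2 = k + 1 by omega]
  ring

lemma f_two_mul_add_one {m : ℕ} (hm : 0 < m) :
    f (2 * m + 1) = (2 * m + 1).choose m * (f m + f (m + 1)) := by
  obtain ⟨k, rfl⟩ : ∃ k, m = k + 1 := ⟨m - 1, by omega⟩
  rw [show 2 * (k + 1) + 1 = 2 * k + 1 + 2 by ring, f,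
    show (2 * k + 1 + 2) / 2 = k + 1 by omega, show (2 * k + 1 + 2 + 1) / 2 = k + 1 + 1 by omega]

lemma centralBinom_succ_eq_two_mul_choose (m : ℕ) :
    centralBinom (m + 1) = 2 * (2 * m + 1).choose m := by
  rw [centralBinom_eq_two_mul_choose, show 2 * (m + 1) = 2 * m + 1 + 1 by ring,
    choose_succ_succ', choose_symm_half]
  ring

lemma three_mul_centralBinom_le {m : ℕ} (hm : 0 < m) :
    3 * centralBinom m ≤ 2 * (2 * m + 1).choose m := by
  -- `C(2m+1,m) = C(2m,m) (2m+1)/(m+1)` and `2 (2m+1) ≥ 3 (m+1)` once `m ≥ 1`.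
  have h := choose_mul_succ_eq (2 * m) m
  rw [← centralBinom_eq_two_mul_choose, show 2 * m + 1 - m = m + 1 by omega] at h
  refine Nat.le_of_mul_le_mul_right ?_ (Nat.succ_pos m)
  nlinarith

lemma three_mul_f_two_mul_le {m : ℕ} (hm : 0 < m) (ih : 3 * f m ≤ f (m + 1)) :
    3 * f (2 * m) ≤ f (2 * m + 1) := by
  rw [f_two_mul hm, f_two_mul_add_one hm]
  calc 3 * (2 * centralBinom m * f m) = 2 * (3 * centralBinom m) * f m := by ring
    _ ≤ 2 * (2 * (2 * m + 1).choose m) * f m := by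
      gcongr 2 * ?_ * _
      exact three_mul_centralBinom_le hm
    _ ≤ (2 * m + 1).choose m * (f m + f (m + 1)) := by nlinarith

lemma three_mul_f_two_mul_add_one_le {m : ℕ} (hm : 0 < m) (ih : 3 * f m ≤ f (m + 1)) :
    3 * f (2 * m + 1) ≤ f (2 * m + 1 + 1) := by
  rw [f_two_mul_add_one hm, show 2 * m + 1 + 1 = 2 * (m + 1) by ring, f_two_mul m.succ_pos,
    centralBinom_succ_eq_two_mul_choose]
  nlinarith

theorem stmt_8 (n : ℕ) (hn : 1 ≤ n) : 3 * f n ≤ f (n + 1) := by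
  induction n using Nat.strong_induction_on with
  | _ n ih =>
    obtain ⟨m, rfl | rfl⟩ := n.even_or_odd'
    · have hm : 0 < m := by omega
      exact three_mul_f_two_mul_le hm (ih m (by omega) hm)
    · rcases m.eq_zero_or_pos with rfl | hm
      · simp [f]
      · exact three_mul_f_two_mul_add_one_le hm (ih m (by omega) hm)
end

section
/- Define f : ℕ → ℕ by f(1) = 1 and f(n) = C(n, ⌊n/2⌋)·(f(⌊n/2⌋) + f(⌈n/2⌉)) for n > 1. If n = 2^m is a power of 2 with m ≥ 0, then f(2^m) = 2^m · (2^m)! / ((2^{m−1})! · (2^{m−2})! · ⋯ · 2! · 1!). -/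
open Nat

lemma f_two_mul_s9 {n : ℕ} (hn : n ≠ 0) : f (2 * n) = (2 * n).choose n * (2 * f n) := by
  obtain ⟨k, rfl⟩ := exists_eq_succ_of_ne_zero hn
  rw [show 2 * (k + 1) = 2 * k + 2 by ring, f, show (2 * k + 2) / 2 = k + 1 by omega,
    show (2 * k + 2 + 1) / 2 = k + 1 by omega, two_mul (f _)]

lemma choose_two_mul_mul_factorial_mul_factorial (n : ℕ) :
    (2 * n).choose n * n ! * n ! = (2 * n)! := by
  simpa [two_mul] using choose_mul_factorial_mul_factorial (le_add_left n n)

theorem stmt_9 (m : ℕ) :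
    f (2 ^ m) * (∏ j ∈ Finset.range m, Nat.factorial (2 ^ j)) =
      2 ^ m * Nat.factorial (2 ^ m) := by
  induction m with
  | zero => simp [f]
  | succ m ih =>
    set n := 2 ^ m
    set P := ∏ j ∈ Finset.range m, (2 ^ j)!
    rw [Finset.prod_range_succ, pow_succ', f_two_mul_s9 (by positivity)]
    calc (2 * n).choose n * (2 * f n) * (P * n !)
        = 2 * (f n * P) * ((2 * n).choose n * n !) := by ring
      _ = 2 * n * ((2 * n).choose n * n ! * n !) := by rw [ih]; ring
      _ = 2 * n * (2 * n)! := by rw [choose_two_mul_mul_factorial_mul_factorial]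
end

section
/- Define f : ℕ → ℕ by f(1) = 1 and f(n) = C(n, ⌊n/2⌋)·(f(⌊n/2⌋) + f(⌈n/2⌉)) for n > 1. Then for every n ≥ 1 and every integer k with 0 < k < n, C(n,k)·(f(k) + f(n−k)) ≥ f(n), with equality if and only if k = ⌊n/2⌋ or k = ⌈n/2⌉. -/
lemma f_eq {n : ℕ} (hn : 2 ≤ n) :
    f n = Nat.choose n (n / 2) * (f (n / 2) + f ((n + 1) / 2)) := by
  obtain ⟨m, rfl⟩ : ∃ m, n = m + 2 := ⟨n - 2, by omega⟩
  rw [f]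

lemma f_pos (n : ℕ) : 0 < f n := by
  induction n using Nat.strong_induction_on with
  | _ n ih =>
    match n with
    | 0 => simp [f]
    | 1 => simp [f]
    | n + 2 =>
      rw [f]
      have h1 := ih ((n + 2) / 2) (by omega)
      have h2 := Nat.choose_pos (show (n+2)/2 ≤ n+2 by omega)
      positivity

lemma f_one : f 1 = 1 := by rw [f]

lemma f_two : f 2 = 4 := by
  rw [f_eq (le_refl 2)]
  norm_num [f_one]

lemma f_succ_gt (m : ℕ) (hm : 1 ≤ m) : 3 * f m < f (m + 1) := by
  induction m using Nat.strong_induction_on with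
  | _ m ih =>
    match m, hm with
    | 1, _ =>
      rw [f_one, f_two]; norm_num
    | m + 2, _ =>
      obtain ⟨ν, hν | hν⟩ := Nat.even_or_odd' (m + 2)
      · have hν1 : 1 ≤ ν := by omega
        have e1 : f (m + 3) = Nat.choose (2*ν+1) ν * (f ν + f (ν+1)) := by
          rw [f_eq (show 2 ≤ m + 3 by omega),
            show (m+3)/2 = ν by omega, show (m+3+1)/2 = ν+1 by omega,
            show m+3 = 2*ν+1 by omega]
        have e2 : f (m + 2) = Nat.choose (2*ν) ν * (f ν + f ν) := by
          rw [f_eq (show 2 ≤ m + 2 by omega),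
            show (m+2)/2 = ν by omega, show (m+2+1)/2 = ν by omega,
            show m+2 = 2*ν by omega]
        have hcc : (ν + 1) * Nat.choose (2*ν+1) ν = (2*ν+1) * Nat.choose (2*ν) ν := by
          have h := Nat.add_one_mul_choose_eq (2*ν) ν
          rw [Nat.choose_symm_half] at h
          calc (ν + 1) * Nat.choose (2*ν+1) ν = Nat.choose (2*ν+1) ν * (ν+1) := by ring
            _ = (2*ν+1) * Nat.choose (2*ν) ν := h.symm
        have ihh := ih ν (by omega) hν1
        rw [e1, e2]
        have key : (ν+1) * (3 * (Nat.choose (2*ν) ν * (f ν + f ν)))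
            < (ν+1) * (Nat.choose (2*ν+1) ν * (f ν + f (ν+1))) := by
          have hcp : 0 < Nat.choose (2*ν) ν := Nat.choose_pos (by omega)
          calc (ν+1) * (3 * (Nat.choose (2*ν) ν * (f ν + f ν)))
              = Nat.choose (2*ν) ν * (6 * (ν+1) * f ν) := by ring
            _ < Nat.choose (2*ν) ν * ((2*ν+1) * (f ν + f (ν+1))) := by
                refine mul_lt_mul_of_pos_left ?_ hcp
                nlinarith [f_pos ν]
            _ = (ν+1) * (Nat.choose (2*ν+1) ν * (f ν + f (ν+1))) := by
                rw [show (ν+1) * (Nat.choose (2*ν+1) ν * (f ν + f (ν+1)))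
                  = ((ν+1) * Nat.choose (2*ν+1) ν) * (f ν + f (ν+1)) by ring, hcc]; ring
        exact Nat.lt_of_mul_lt_mul_left key
      · have hν1 : 1 ≤ ν := by omega
        have e1 : f (m + 3) = Nat.choose (2*ν+1+1) (ν+1) * (f (ν+1) + f (ν+1)) := by
          rw [f_eq (show 2 ≤ m + 3 by omega),
            show (m+3)/2 = ν+1 by omega, show (m+3+1)/2 = ν+1 by omega,
            show m+3 = 2*ν+1+1 by omega]
        have e2 : f (m + 2) = Nat.choose (2*ν+1) ν * (f ν + f (ν+1)) := by
          rw [f_eq (show 2 ≤ m + 2 by omega),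
            show (m+2)/2 = ν by omega, show (m+2+1)/2 = ν+1 by omega,
            show m+2 = 2*ν+1 by omega]
        have hcc : Nat.choose (2*ν+1+1) (ν+1) = 2 * Nat.choose (2*ν+1) ν := by
          rw [Nat.choose_succ_succ, Nat.choose_symm_half]
          omega
        have ihh := ih ν (by omega) hν1
        rw [e1, e2, hcc]
        have hcp : 0 < Nat.choose (2*ν+1) ν := Nat.choose_pos (by omega)
        nlinarith [f_pos ν]

set_option maxHeartbeats 2000000 in
lemma keyA (n : ℕ) : ∀ d : ℕ, 1 ≤ d → 2*d + 2 ≤ n → f n < Nat.choose n d * f (n - d) := by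
  induction n using Nat.strong_induction_on with
  | _ n ih =>
    intro d hd1 hdn
    obtain ⟨h, hh⟩ : ∃ x, x = n / 2 := ⟨_, rfl⟩
    obtain ⟨h', hh'⟩ : ∃ x, x = n - n / 2 := ⟨_, rfl⟩
    obtain ⟨m, hm⟩ : ∃ x, x = n - d := ⟨_, rfl⟩
    have hfe : f n = Nat.choose n h * (f h + f h') := by
      rw [f_eq (show 2 ≤ n by omega), ← hh, show (n+1)/2 = h' by omega]
    have hchp : 0 < Nat.choose n h := Nat.choose_pos (by omega)
    by_cases hcase : 2*d + 6 ≤ n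
    · -- main case : d ≤ h - 3
      obtain ⟨μ, hμ⟩ : ∃ x, x = m / 2 := ⟨_, rfl⟩
      obtain ⟨μ', hμ'⟩ : ∃ x, x = m - m / 2 := ⟨_, rfl⟩
      obtain ⟨δ, hδ⟩ : ∃ x, x = h - μ := ⟨_, rfl⟩
      obtain ⟨δ', hδ'⟩ : ∃ x, x = h' - μ' := ⟨_, rfl⟩
      have hsum : δ + δ' = d := by omega
      have h2δ : 2*δ ≤ d + 1 := by omega
      have h2δ' : 2*δ' ≤ d + 1 := by omega
      have hdh : d ≤ h - 3 := by omega
      -- induction hypotheses for the two halves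
      have ih1 : f h ≤ Nat.choose h δ * f μ := by
        rcases Nat.eq_zero_or_pos δ with h0 | hpos
        · rw [h0, Nat.choose_zero_right, one_mul, show μ = h by omega]
        · have := ih h (by omega) δ hpos (by omega)
          rw [show h - δ = μ by omega] at this
          exact this.le
      have ih2 : f h' ≤ Nat.choose h' δ' * f μ' := by
        rcases Nat.eq_zero_or_pos δ' with h0 | hpos
        · rw [h0, Nat.choose_zero_right, one_mul, show μ' = h' by omega]
        · have := ih h' (by omega) δ' hpos (by omega)
          rw [show h' - δ' = μ' by omega] at this
          exact this.le
      have hstrict : f h + f h' < Nat.choose h δ * f μ + Nat.choose h' δ' * f μ' := by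
        rcases Nat.eq_zero_or_pos δ with h0 | hpos
        · have hpos' : 0 < δ' := by omega
          have := ih h' (by omega) δ' hpos' (by omega)
          rw [show h' - δ' = μ' by omega] at this
          exact add_lt_add_of_le_of_lt ih1 this
        · have := ih h (by omega) δ hpos (by omega)
          rw [show h - δ = μ by omega] at this
          exact add_lt_add_of_lt_of_le this ih2
      -- factorial identities
      have c1 : Nat.choose h δ * δ.factorial * μ.factorial = h.factorial := by
        have := Nat.choose_mul_factorial_mul_factorial (show δ ≤ h by omega)
        rwa [show h - δ = μ by omega] at this
      have c2 : Nat.choose h' δ' * δ'.factorial * μ'.factorial = h'.factorial := by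
        have := Nat.choose_mul_factorial_mul_factorial (show δ' ≤ h' by omega)
        rwa [show h' - δ' = μ' by omega] at this
      have c3 : Nat.choose n h * h.factorial * h'.factorial = n.factorial := by
        have := Nat.choose_mul_factorial_mul_factorial (show h ≤ n by omega)
        rwa [show n - h = h' by omega] at this
      have c4 : Nat.choose m μ * μ.factorial * μ'.factorial = m.factorial := by
        have := Nat.choose_mul_factorial_mul_factorial (show μ ≤ m by omega)
        rwa [show m - μ = μ' by omega] at this
      have c5 : Nat.choose n d * d.factorial * m.factorial = n.factorial := by
        have := Nat.choose_mul_factorial_mul_factorial (show d ≤ n by omega)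
        rwa [show n - d = m by omega] at this
      have c6 : Nat.choose d δ * δ.factorial * δ'.factorial = d.factorial := by
        have := Nat.choose_mul_factorial_mul_factorial (show δ ≤ d by omega)
        rwa [show d - δ = δ' by omega] at this
      have L : (Nat.choose n h * Nat.choose h δ * Nat.choose h' δ') *
          (δ.factorial * μ.factorial * (δ'.factorial * μ'.factorial)) = n.factorial := by
        calc (Nat.choose n h * Nat.choose h δ * Nat.choose h' δ') *
            (δ.factorial * μ.factorial * (δ'.factorial * μ'.factorial))
            = Nat.choose n h * (Nat.choose h δ * δ.factorial * μ.factorial) *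
              (Nat.choose h' δ' * δ'.factorial * μ'.factorial) := by ring
          _ = Nat.choose n h * h.factorial * h'.factorial := by rw [c1, c2]
          _ = n.factorial := c3
      have R : (Nat.choose n d * Nat.choose m μ * Nat.choose d δ) *
          (δ.factorial * μ.factorial * (δ'.factorial * μ'.factorial)) = n.factorial := by
        calc (Nat.choose n d * Nat.choose m μ * Nat.choose d δ) *
            (δ.factorial * μ.factorial * (δ'.factorial * μ'.factorial))
            = Nat.choose n d * (Nat.choose d δ * δ.factorial * δ'.factorial) *
              (Nat.choose m μ * μ.factorial * μ'.factorial) := by ring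
          _ = Nat.choose n d * d.factorial * m.factorial := by rw [c6, c4]
          _ = n.factorial := c5
      have Ppos : 0 < δ.factorial * μ.factorial * (δ'.factorial * μ'.factorial) := by
        positivity
      have E : Nat.choose n h * Nat.choose h δ * Nat.choose h' δ'
          = Nat.choose n d * Nat.choose m μ * Nat.choose d δ :=
        Nat.eq_of_mul_eq_mul_right Ppos (L.trans R.symm)
      have key1 : Nat.choose n h * Nat.choose h δ ≤ Nat.choose n d * Nat.choose m μ := by
        have cc : Nat.choose d δ ≤ Nat.choose h' δ' := by
          calc Nat.choose d δ = Nat.choose d δ' := by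
                rw [← Nat.choose_symm (show δ ≤ d by omega), show d - δ = δ' by omega]
            _ ≤ Nat.choose h' δ' := Nat.choose_le_choose δ' (by omega)
        have hp : 0 < Nat.choose h' δ' := Nat.choose_pos (by omega)
        refine Nat.le_of_mul_le_mul_right ?_ hp
        calc Nat.choose n h * Nat.choose h δ * Nat.choose h' δ'
            = Nat.choose n d * Nat.choose m μ * Nat.choose d δ := E
          _ ≤ Nat.choose n d * Nat.choose m μ * Nat.choose h' δ' := by
              exact Nat.mul_le_mul_left _ cc
      have key2 : Nat.choose n h * Nat.choose h' δ' ≤ Nat.choose n d * Nat.choose m μ := by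
        have cc : Nat.choose d δ ≤ Nat.choose h δ := Nat.choose_le_choose δ (by omega)
        have hp : 0 < Nat.choose h δ := Nat.choose_pos (by omega)
        refine Nat.le_of_mul_le_mul_right ?_ hp
        calc Nat.choose n h * Nat.choose h' δ' * Nat.choose h δ
            = Nat.choose n d * Nat.choose m μ * Nat.choose d δ := by
              rw [← E]; ring
          _ ≤ Nat.choose n d * Nat.choose m μ * Nat.choose h δ := by
              exact Nat.mul_le_mul_left _ cc
      have fm : f m = Nat.choose m μ * (f μ + f μ') := by
        rw [f_eq (show 2 ≤ m by omega), ← hμ, show (m+1)/2 = μ' by omega]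
      rw [show n - d = m by omega, hfe, fm]
      calc Nat.choose n h * (f h + f h')
          < Nat.choose n h * (Nat.choose h δ * f μ + Nat.choose h' δ' * f μ') :=
            mul_lt_mul_of_pos_left hstrict hchp
        _ = (Nat.choose n h * Nat.choose h δ) * f μ
            + (Nat.choose n h * Nat.choose h' δ') * f μ' := by ring
        _ ≤ (Nat.choose n d * Nat.choose m μ) * f μ
            + (Nat.choose n d * Nat.choose m μ) * f μ' := by
            exact add_le_add (Nat.mul_le_mul_right _ key1) (Nat.mul_le_mul_right _ key2)
        _ = Nat.choose n d * (Nat.choose m μ * (f μ + f μ')) := by ring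
    · -- boundary cases: d = h - 1 or d = h - 2
      have hcases : d = h - 1 ∨ d = h - 2 := by omega
      rcases hcases with hb | hb
      · -- d = h - 1, m = h' + 1
        have hh2 : 2 ≤ h := by omega
        have s1 : Nat.choose n h * h = Nat.choose n d * (h' + 1) := by
          have := Nat.choose_succ_right_eq n (h - 1)
          rw [show h - 1 + 1 = h by omega, show n - (h-1) = h'+1 by omega,
            show h - 1 = d by omega] at this
          exact this
        have key : (h'+1) * (f h + f h') < h * f (h'+1) := by
          obtain ⟨p, hp | hp⟩ := Nat.even_or_odd' n
          · rw [show h' = h by omega]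
            have r1 := f_succ_gt h (by omega)
            have P1 : h * (3 * f h + 1) ≤ h * f (h+1) := mul_le_mul_right (by omega) h
            have P2 : 2 * f h ≤ h * f h := mul_le_mul_left (show 2 ≤ h by omega) (f h)
            nlinarith [P1, P2, show 2 ≤ h by omega]
          · rw [show h' = h + 1 by omega]
            have r1 := f_succ_gt h (by omega)
            have r2 := f_succ_gt (h+1) (by omega)
            have P1 : h * (3 * f (h+1) + 1) ≤ h * f (h+1+1) := mul_le_mul_right (by omega) h
            have P2 : (h+2) * (3 * f h) ≤ (h+2) * f (h+1) := mul_le_mul_right r1.le (h+2)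
            have P3 : 2 * f (h+1) ≤ h * f (h+1) := mul_le_mul_left (show 2 ≤ h by omega) (f (h+1))
            nlinarith [P1, P2, P3, show 2 ≤ h by omega]
        refine lt_of_mul_lt_mul_right ?_ (Nat.zero_le (h'+1))
        rw [show n - d = h' + 1 by omega, hfe]
        calc Nat.choose n h * (f h + f h') * (h'+1)
            = Nat.choose n h * ((h'+1) * (f h + f h')) := by ring
          _ < Nat.choose n h * (h * f (h'+1)) := mul_lt_mul_of_pos_left key hchp
          _ = (Nat.choose n h * h) * f (h'+1) := by ring
          _ = (Nat.choose n d * (h'+1)) * f (h'+1) := by rw [s1]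
          _ = Nat.choose n d * f (h'+1) * (h'+1) := by ring
      · -- d = h - 2, m = h' + 2
        have hh3 : 3 ≤ h := by omega
        obtain ⟨q, hq⟩ : ∃ x, x = h - 1 := ⟨_, rfl⟩
        have hqh : h = q + 1 := by omega
        have hq2 : 2 ≤ q := by omega
        have s1 : Nat.choose n h * h = Nat.choose n q * (h' + 1) := by
          have := Nat.choose_succ_right_eq n q
          rw [show q + 1 = h by omega, show n - q = h'+1 by omega] at this
          exact this
        have s2 : Nat.choose n q * q = Nat.choose n d * (h' + 2) := by
          have := Nat.choose_succ_right_eq n d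
          rw [show d + 1 = q by omega, show n - d = h'+2 by omega] at this
          exact this
        have s3 : Nat.choose n h * (h * q) = Nat.choose n d * ((h'+1) * (h'+2)) := by
          calc Nat.choose n h * (h * q) = (Nat.choose n h * h) * q := by ring
            _ = (Nat.choose n q * (h'+1)) * q := by rw [s1]
            _ = (Nat.choose n q * q) * (h'+1) := by ring
            _ = (Nat.choose n d * (h'+2)) * (h'+1) := by rw [s2]
            _ = Nat.choose n d * ((h'+1) * (h'+2)) := by ring
        have key : ((h'+1) * (h'+2)) * (f h + f h') < (h * q) * f (h'+2) := by
          obtain ⟨p, hp | hp⟩ := Nat.even_or_odd' n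
          · rw [show h' = h by omega]
            have r1 := f_succ_gt h (by omega)
            have r2 := f_succ_gt (h+1) (by omega)
            have c9 : 9 * f h + 4 ≤ f (h+1+1) := by omega
            have P1 : (h*q) * (9 * f h + 4) ≤ (h*q) * f (h+1+1) := mul_le_mul_right c9 (h*q)
            have cineq : 2*((h+1)*(h+2)) ≤ 9*(h*q) := by nlinarith [hq2, hqh]
            have P4 := mul_le_mul_left cineq (f h)
            have hpq : 0 < h*q := by positivity
            have e2 : f (h+1+1) = f (h+2) := by norm_num
            rw [← e2]
            nlinarith [P1, P4, cineq, hpq]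
          · rw [show h' = h + 1 by omega]
            have r1 := f_succ_gt h (by omega)
            have r2 := f_succ_gt (h+1) (by omega)
            have r3 := f_succ_gt (h+1+1) (by omega)
            have c9 : 9 * f (h+1) + 4 ≤ f (h+1+1+1) := by omega
            have P1 : (h*q) * (9 * f (h+1) + 4) ≤ (h*q) * f (h+1+1+1) := mul_le_mul_right c9 (h*q)
            have P2 : ((h+1+1)*(h+1+2)) * (3 * f h) ≤ ((h+1+1)*(h+1+2)) * f (h+1) :=
              mul_le_mul_right r1.le _
            have cineq : 4*((h+1+1)*(h+1+2)) ≤ 27*(h*q) := by nlinarith [hq2, hqh]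
            have P4 := mul_le_mul_left cineq (f (h+1))
            have hpq : 0 < h*q := by positivity
            have e2 : f (h+1+1+1) = f (h+1+2) := by norm_num
            rw [← e2]
            nlinarith [P1, P2, P4, cineq, hpq, f_pos h, f_pos (h+1)]
        refine lt_of_mul_lt_mul_right ?_ (Nat.zero_le ((h'+1)*(h'+2)))
        rw [show n - d = h' + 2 by omega, hfe]
        calc Nat.choose n h * (f h + f h') * ((h'+1)*(h'+2))
            = Nat.choose n h * (((h'+1)*(h'+2)) * (f h + f h')) := by ring
          _ < Nat.choose n h * ((h*q) * f (h'+2)) := mul_lt_mul_of_pos_left key hchp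
          _ = (Nat.choose n h * (h*q)) * f (h'+2) := by ring
          _ = (Nat.choose n d * ((h'+1)*(h'+2))) * f (h'+2) := by rw [s3]
          _ = Nat.choose n d * f (h'+2) * ((h'+1)*(h'+2)) := by ring

theorem stmt_12 (n k : ℕ) (hn : 1 ≤ n) (hk : 0 < k) (hkn : k < n) :
    f n ≤ Nat.choose n k * (f k + f (n - k)) ∧
    (Nat.choose n k * (f k + f (n - k)) = f n ↔ k = n / 2 ∨ k = (n + 1) / 2) := by
  have hn2 : 2 ≤ n := by omega
  have eq1 : Nat.choose n (n/2) * (f (n/2) + f (n - n/2)) = f n := by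
    rw [f_eq hn2, show n - n/2 = (n+1)/2 by omega]
  have eq2 : Nat.choose n ((n+1)/2) * (f ((n+1)/2) + f (n - (n+1)/2)) = f n := by
    rw [show (n+1)/2 = n - n/2 by omega, Nat.choose_symm (show n/2 ≤ n by omega),
      show n - (n - n/2) = n/2 by omega, f_eq hn2, show (n+1)/2 = n - n/2 by omega,
      add_comm (f (n - n/2))]
  have eqk : (k = n/2 ∨ k = (n+1)/2) → Nat.choose n k * (f k + f (n - k)) = f n := by
    rintro (rfl | rfl)
    · exact eq1
    · exact eq2
  have strictk : k ≠ n/2 → k ≠ (n+1)/2 → f n < Nat.choose n k * (f k + f (n - k)) := by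
    intro h1 h2
    rcases (show k < n/2 ∨ (n+1)/2 < k by omega) with hlt | hgt
    · have := keyA n k hk (by omega)
      calc f n < Nat.choose n k * f (n - k) := this
        _ ≤ Nat.choose n k * (f k + f (n - k)) := by
            exact Nat.mul_le_mul_left _ (by omega)
    · have h3 : 1 ≤ n - k := by omega
      have h4 : 2*(n-k) + 2 ≤ n := by omega
      have := keyA n (n-k) h3 h4
      rw [show n - (n - k) = k by omega, Nat.choose_symm (show k ≤ n by omega)] at this
      calc f n < Nat.choose n k * f k := this
        _ ≤ Nat.choose n k * (f k + f (n - k)) := by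
            exact Nat.mul_le_mul_left _ (by omega)
  constructor
  · by_cases h1 : k = n/2
    · exact (eqk (Or.inl h1)).ge
    · by_cases h2 : k = (n+1)/2
      · exact (eqk (Or.inr h2)).ge
      · exact (strictk h1 h2).le
  · constructor
    · intro heq
      by_contra hno
      push_neg at hno
      exact absurd heq (by have := strictk hno.1 hno.2; omega)
    · exact eqk
end

section
/- For all natural numbers n ≥ 1, the Stirling bounds e^{1/(12n+1)}·S(n) ≤ n! ≤ e^{1/(12n)}·S(n) hold, where S(n) = √(2πn)·(n/e)^n. -/
open Real Filter Stirling

/-- Upper step inequality: the telescoping differences of `log ∘ stirlingSeq` are at most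
the differences of `1/(12 n)`. -/
lemma step_upper (m : ℕ) :
    Real.log (stirlingSeq (m + 1)) - Real.log (stirlingSeq (m + 2)) ≤
      1 / (12 * ((m : ℝ) + 1)) - 1 / (12 * ((m : ℝ) + 2)) := by
  set y : ℝ := (1 / (2 * ((m : ℕ) + 1 : ℕ) + 1 : ℝ)) ^ 2 with hy
  have hy0 : (0 : ℝ) ≤ y := sq_nonneg _
  have hy1 : y < 1 := by
    rw [hy, div_pow, one_pow, div_lt_one (by positivity)]
    push_cast
    nlinarith [Nat.cast_nonneg (α := ℝ) m]
  have hgeo : HasSum (fun k : ℕ => (1 / 3 : ℝ) * y ^ (k + 1)) (1 / 3 * (y / (1 - y))) := by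
    have := (hasSum_geometric_of_lt_one hy0 hy1).mul_left (1 / 3 * y)
    have heq : ∀ k : ℕ, 1 / 3 * y * y ^ k = (1 / 3 : ℝ) * y ^ (k + 1) := by
      intro k; rw [pow_succ]; ring
    simp_rw [heq] at this
    rw [div_eq_mul_inv y, ← mul_assoc]
    exact this
  have hab : ∀ k : ℕ, (1 : ℝ) / (2 * ((k : ℕ) + 1 : ℕ) + 1) * y ^ (k + 1) ≤ (1 / 3 : ℝ) * y ^ (k + 1) := by
    intro k
    apply mul_le_mul_of_nonneg_right _ (pow_nonneg hy0 _)
    rw [div_le_div_iff₀ (by positivity) (by norm_num)]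
    push_cast
    nlinarith [Nat.cast_nonneg (α := ℝ) k]
  have h := hasSum_le hab (Stirling.log_stirlingSeq_diff_hasSum m) hgeo
  refine h.trans (le_of_eq ?_)
  rw [hy]
  push_cast
  have ha : (0 : ℝ) < 2 * ((m : ℝ) + 1) + 1 := by positivity
  have h2 : ((2 * ((m : ℝ) + 1) + 1)) ^ 2 - 1 ≠ 0 := by nlinarith [Nat.cast_nonneg (α := ℝ) m]
  have h3 : (m : ℝ) + 1 ≠ 0 := by positivity
  have h4 : (m : ℝ) + 2 ≠ 0 := by positivity
  field_simp
  ring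

/-- Lower step inequality. -/
lemma step_lower (m : ℕ) :
    1 / (12 * ((m : ℝ) + 1) + 1) - 1 / (12 * ((m : ℝ) + 2) + 1) ≤
      Real.log (stirlingSeq (m + 1)) - Real.log (stirlingSeq (m + 2)) := by
  have h := le_hasSum (Stirling.log_stirlingSeq_diff_hasSum m) 0
    (fun j _ => by positivity)
  refine le_trans ?_ h
  push_cast
  rw [pow_one, div_pow, one_pow, div_mul_div_comm, one_mul]
  have hm : (0 : ℝ) ≤ (m : ℝ) := Nat.cast_nonneg m
  rw [sub_le_iff_le_add,
    div_add_div _ _ (by positivity) (by positivity),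
    div_le_div_iff₀ (by positivity) (by positivity)]
  nlinarith [sq_nonneg ((m : ℝ))]

lemma tendsto_log_stirling :
    Filter.Tendsto (fun n : ℕ => Real.log (stirlingSeq n)) atTop (nhds (Real.log (Real.sqrt π))) :=
  ((Real.continuousAt_log (by positivity : Real.sqrt π ≠ 0)).tendsto).comp
    Stirling.tendsto_stirlingSeq_sqrt_pi

theorem stirling_log_bounds (n : ℕ) (hn : 1 ≤ n) :
    Real.log (Real.sqrt π) + 1 / (12 * (n : ℝ) + 1) ≤ Real.log (stirlingSeq n) ∧
    Real.log (stirlingSeq n) ≤ Real.log (Real.sqrt π) + 1 / (12 * (n : ℝ)) := by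
  have hupper : Real.log (stirlingSeq n) - 1 / (12 * (n : ℝ)) ≤ Real.log (Real.sqrt π) := by
    have hmono : ∀ m : ℕ, n ≤ m →
        Real.log (stirlingSeq n) - 1 / (12 * (n : ℝ)) ≤
        Real.log (stirlingSeq m) - 1 / (12 * (m : ℝ)) := by
      intro m hm
      induction m, hm using Nat.le_induction with
      | base => exact le_rfl
      | succ m hm ih =>
        refine ih.trans ?_
        obtain ⟨k, rfl⟩ : ∃ k, m = k + 1 := ⟨m - 1, by omega⟩
        have := step_upper k
        show _ ≤ Real.log (stirlingSeq (k + 2)) - 1 / (12 * ((k + 2 : ℕ) : ℝ))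
        push_cast
        push_cast at this
        linarith
    have hlim : Filter.Tendsto (fun m : ℕ => Real.log (stirlingSeq m) - 1 / (12 * (m : ℝ)))
        atTop (nhds (Real.log (Real.sqrt π))) := by
      have h2 : Filter.Tendsto (fun m : ℕ => 1 / (12 * (m : ℝ))) atTop (nhds 0) := by
        have h : Filter.Tendsto (fun m : ℕ => 12 * (m : ℝ)) atTop atTop :=
          (tendsto_natCast_atTop_atTop (R := ℝ)).const_mul_atTop (by norm_num)
        have := h.inv_tendsto_atTop
        simp only [Pi.inv_def] at this
        simpa [one_div] using this
      simpa using tendsto_log_stirling.sub h2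
    exact ge_of_tendsto hlim (eventually_atTop.2 ⟨n, hmono⟩)
  have hlower : Real.log (Real.sqrt π) ≤ Real.log (stirlingSeq n) - 1 / (12 * (n : ℝ) + 1) := by
    have hmono : ∀ m : ℕ, n ≤ m →
        Real.log (stirlingSeq m) - 1 / (12 * (m : ℝ) + 1) ≤
        Real.log (stirlingSeq n) - 1 / (12 * (n : ℝ) + 1) := by
      intro m hm
      induction m, hm using Nat.le_induction with
      | base => exact le_rfl
      | succ m hm ih =>
        refine le_trans ?_ ih
        obtain ⟨k, rfl⟩ : ∃ k, m = k + 1 := ⟨m - 1, by omega⟩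
        have := step_lower k
        show Real.log (stirlingSeq (k + 2)) - 1 / (12 * ((k + 2 : ℕ) : ℝ) + 1) ≤ _
        push_cast
        push_cast at this
        linarith
    have hlim : Filter.Tendsto (fun m : ℕ => Real.log (stirlingSeq m) - 1 / (12 * (m : ℝ) + 1))
        atTop (nhds (Real.log (Real.sqrt π))) := by
      have h2 : Filter.Tendsto (fun m : ℕ => 1 / (12 * (m : ℝ) + 1)) atTop (nhds 0) := by
        have h : Filter.Tendsto (fun m : ℕ => 12 * (m : ℝ) + 1) atTop atTop :=
          tendsto_atTop_add_const_right _ 1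
            ((tendsto_natCast_atTop_atTop (R := ℝ)).const_mul_atTop (by norm_num))
        have := h.inv_tendsto_atTop
        simp only [Pi.inv_def] at this
        simpa [one_div] using this
      simpa using tendsto_log_stirling.sub h2
    exact le_of_tendsto hlim (eventually_atTop.2 ⟨n, hmono⟩)
  constructor <;> linarith

theorem stmt_17 (n : ℕ) (hn : 1 ≤ n) :
    Real.exp (1 / (12 * (n : ℝ) + 1)) * S n ≤ (Nat.factorial n : ℝ) ∧
    (Nat.factorial n : ℝ) ≤ Real.exp (1 / (12 * (n : ℝ))) * S n := by
  obtain ⟨hA, hB⟩ := stirling_log_bounds n hn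
  have hnpos : (0 : ℝ) < n := by exact_mod_cast hn
  have hspos : 0 < stirlingSeq n := by
    obtain ⟨k, rfl⟩ : ∃ k, n = k + 1 := ⟨n - 1, by omega⟩
    exact stirlingSeq'_pos k
  have hd : (0 : ℝ) < Real.sqrt (2 * n) * ((n : ℝ) / Real.exp 1) ^ n := by positivity
  -- S n = √π * (√(2n) * (n/e)^n)
  have hS : S n = Real.sqrt π * (Real.sqrt (2 * n) * ((n : ℝ) / Real.exp 1) ^ n) := by
    rw [S]
    rw [Real.rpow_natCast]
    rw [show (2 : ℝ) * π * n = π * (2 * n) by ring, Real.sqrt_mul Real.pi_pos.le]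
    ring
  have hfac : (Nat.factorial n : ℝ) =
      stirlingSeq n * (Real.sqrt (2 * n) * ((n : ℝ) / Real.exp 1) ^ n) := by
    rw [stirlingSeq, div_mul_cancel₀]
    positivity
  have hexpA : Real.exp (Real.log (Real.sqrt π) + 1 / (12 * (n : ℝ) + 1)) ≤ stirlingSeq n := by
    rw [← Real.exp_log hspos]
    exact Real.exp_le_exp.2 hA
  have hexpB : stirlingSeq n ≤ Real.exp (Real.log (Real.sqrt π) + 1 / (12 * (n : ℝ))) := by
    rw [← Real.exp_log hspos]
    exact Real.exp_le_exp.2 hB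
  rw [Real.exp_add, Real.exp_log (by positivity : (0:ℝ) < Real.sqrt π)] at hexpA hexpB
  constructor
  · rw [hS, hfac]
    calc Real.exp (1 / (12 * (n : ℝ) + 1)) *
          (Real.sqrt π * (Real.sqrt (2 * n) * ((n : ℝ) / Real.exp 1) ^ n))
        = (Real.sqrt π * Real.exp (1 / (12 * (n : ℝ) + 1))) *
          (Real.sqrt (2 * n) * ((n : ℝ) / Real.exp 1) ^ n) := by ring
      _ ≤ stirlingSeq n * (Real.sqrt (2 * n) * ((n : ℝ) / Real.exp 1) ^ n) :=
          mul_le_mul_of_nonneg_right hexpA hd.le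
  · rw [hS, hfac]
    calc stirlingSeq n * (Real.sqrt (2 * n) * ((n : ℝ) / Real.exp 1) ^ n)
        ≤ (Real.sqrt π * Real.exp (1 / (12 * (n : ℝ)))) *
          (Real.sqrt (2 * n) * ((n : ℝ) / Real.exp 1) ^ n) :=
          mul_le_mul_of_nonneg_right hexpB hd.le
      _ = Real.exp (1 / (12 * (n : ℝ))) *
          (Real.sqrt π * (Real.sqrt (2 * n) * ((n : ℝ) / Real.exp 1) ^ n)) := by ring
end
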